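/- Let (M, K, β) be a braided Grothendieck–Verdier category. The map f ↦ (θ⁺)⁻¹ ∘ f defines a bijection between the set of pivotal structures f : Id_M ≅ D² and the set of twists θ on (M, β) satisfying θ_K = id_K. -/

import Mathlib

open CategoryTheory Opposite MonoidalCategory

universe v u

/-- A Grothendieck–Verdier category structure on a monoidal category `M`:
a dualizing object `K`, the duality anti-equivalence `D`, and the natural
family of bijections `Hom(X ⊗ Y, K) ≃ Hom(X, D Y)`. -/
structure GVCat (M : Type u) [Category.{v} M] [MonoidalCategory M] where
  K : M
  D : Mᵒᵖ ≌ M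
  homEquiv : ∀ X Y : M, (X ⊗ Y ⟶ K) ≃ (X ⟶ D.functor.obj (op Y))
  homEquiv_natX : ∀ {X X' : M} (Y : M) (f : X' ⟶ X) (h : X ⊗ Y ⟶ K),
    homEquiv X' Y (f ▷ Y ≫ h) = f ≫ homEquiv X Y h
  homEquiv_natY : ∀ (X : M) {Y Y' : M} (g : Y' ⟶ Y) (h : X ⊗ Y ⟶ K),
    homEquiv X Y' (X ◁ g ≫ h) = homEquiv X Y h ≫ D.functor.map g.op

namespace GVCat

variable {M : Type u} [Category.{v} M] [MonoidalCategory M] (G : GVCat M)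

/-- The duality functor on objects: `D Y`. -/
abbrev d (Y : M) : M := G.D.functor.obj (op Y)

/-- The inverse duality functor on objects: `D⁻¹ X`. -/
abbrev dinv (X : M) : M := (G.D.inverse.obj X).unop

/-- The duality functor on morphisms. -/
abbrev dmap {A B : M} (f : A ⟶ B) : G.d B ⟶ G.d A := G.D.functor.map f.op

/-- The inverse duality functor on morphisms. -/
abbrev dinvmap {A B : M} (f : A ⟶ B) : G.dinv B ⟶ G.dinv A := (G.D.inverse.map f).unop

/-- `D² Y`. -/
abbrev dd (Y : M) : M := G.d (G.d Y)

/-- `D²` as a covariant endofunctor of `M`. -/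
def ddF : M ⥤ M := G.D.functor.rightOp ⋙ G.D.functor

/-- The second defining natural bijection `Hom(X ⊗ Y, K) ≃ Hom(Y, D⁻¹ X)`. -/
def homEquiv' (X Y : M) : (X ⊗ Y ⟶ G.K) ≃ (Y ⟶ G.dinv X) :=
  (G.homEquiv X Y).trans
    ((G.D.symm.toAdjunction.homEquiv X (op Y)).symm.trans (opEquiv _ _))

/-- The canonical isomorphism `D⁻¹ (D X) ≅ X`. -/
def dinvD (X : M) : G.dinv (G.d X) ≅ X := (G.D.unitIso.app (op X)).unop

/-- The canonical isomorphism `D (D⁻¹ X) ≅ X`. -/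
def dDinv (X : M) : G.d (G.dinv X) ≅ X := G.D.counitIso.app X

/-- The canonical natural bijection `g : Hom(X ⊗ Y, K) ≃ Hom(D²Y ⊗ X, K)`. -/
def g (X Y : M) : (X ⊗ Y ⟶ G.K) ≃ (G.dd Y ⊗ X ⟶ G.K) :=
  ((G.homEquiv X Y).trans ((Iso.refl X).homCongr (G.dinvD (G.d Y)).symm)).trans
    (G.homEquiv' (G.dd Y) X).symm

end GVCat

namespace GVCat

variable {M : Type u} [Category.{v} M] [MonoidalCategory M] (G : GVCat M)

/-- The composite bijection
`Hom(D²(Y₁⊗Y₂) ⊗ X, K) ≃ Hom((D²Y₁ ⊗ D²Y₂) ⊗ X, K)` obtained from `g⁻¹` followed by two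
applications of `g` (with the associativity constraints inserted). -/
def gchain (Y₁ Y₂ X : M) :
    (G.dd (Y₁ ⊗ Y₂) ⊗ X ⟶ G.K) ≃ ((G.dd Y₁ ⊗ G.dd Y₂) ⊗ X ⟶ G.K) :=
  (G.g X (Y₁ ⊗ Y₂)).symm.trans <|
    ((α_ X Y₁ Y₂).symm.homCongr (Iso.refl G.K)).trans <|
      (G.g (X ⊗ Y₁) Y₂).trans <|
        ((α_ (G.dd Y₂) X Y₁).symm.homCongr (Iso.refl G.K)).trans <|
          (G.g (G.dd Y₂ ⊗ X) Y₁).trans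
            ((α_ (G.dd Y₁) (G.dd Y₂) X).symm.homCongr (Iso.refl G.K))

/-- The characterizing property of the canonical monoidal structure
`u : D²(Y₁ ⊗ Y₂) ≅ D²Y₁ ⊗ D²Y₂` on `D²`. -/
def UChar (u : ∀ Y₁ Y₂ : M, G.dd (Y₁ ⊗ Y₂) ≅ G.dd Y₁ ⊗ G.dd Y₂) : Prop :=
  ∀ (Y₁ Y₂ X : M) (h : G.dd (Y₁ ⊗ Y₂) ⊗ X ⟶ G.K),
    ((u Y₁ Y₂).inv ▷ X) ≫ h = G.gchain Y₁ Y₂ X h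

/-- The characterizing property of the canonical unit morphism `η : 𝟙 ⟶ D² 𝟙`. -/
def EtaChar (η : 𝟙_ M ⟶ G.dd (𝟙_ M)) : Prop :=
  ∀ (X : M) (h : X ⊗ 𝟙_ M ⟶ G.K),
    (η ▷ X) ≫ G.g X (𝟙_ M) h = (λ_ X).hom ≫ (ρ_ X).inv ≫ h

/-- The morphism `D²K ⟶ K` which is the image of `id K` under
`Hom(𝟙 ⊗ K, K) ≅ Hom(D²K ⊗ 𝟙, K)`; it is inverse to the canonical isomorphism
`K ≅ D²K`. -/
def mK : G.dd G.K ⟶ G.K := (ρ_ (G.dd G.K)).inv ≫ G.g (𝟙_ M) G.K (λ_ G.K).hom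

/-- `cK : K ⟶ D²K` is the canonical isomorphism `K ≅ D²K`. -/
def CKChar (cK : G.K ⟶ G.dd G.K) : Prop :=
  cK ≫ G.mK = 𝟙 G.K ∧ G.mK ≫ cK = 𝟙 (G.dd G.K)

variable [BraidedCategory M]

/-- The characterizing property of `θ⁺ : Id ≅ D²`: precomposition with `θ⁺_Y ⊗ id X`
equals `g⁻¹` followed by pullback along `β⁺_{Y,X} = β_{Y,X}`. -/
def ThetaPlusChar (θ : ∀ Y : M, Y ≅ G.dd Y) : Prop :=
  ∀ (Y X : M) (h : G.dd Y ⊗ X ⟶ G.K),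
    ((θ Y).hom ▷ X) ≫ h = (β_ Y X).hom ≫ (G.g X Y).symm h

/-- The characterizing property of `θ⁻ : Id ≅ D²`: precomposition with `θ⁻_Y ⊗ id X`
equals `g⁻¹` followed by pullback along `β⁻_{Y,X} = β_{X,Y}⁻¹`. -/
def ThetaMinusChar (θ : ∀ Y : M, Y ≅ G.dd Y) : Prop :=
  ∀ (Y X : M) (h : G.dd Y ⊗ X ⟶ G.K),
    ((θ Y).hom ▷ X) ≫ h = (β_ X Y).inv ≫ (G.g X Y).symm h

end GVCat

/-- A twist on a braided category: an automorphism `τ` of the identity functor with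
`τ_{X⊗Y} = β_{Y,X} ∘ β_{X,Y} ∘ (τ_X ⊗ τ_Y)`; equivalently, a monoidal isomorphism
`Id ≅ J` where `J` is the Joyal–Street equivalence. -/
def IsTwist {M : Type u} [Category.{v} M] [MonoidalCategory M] [BraidedCategory M]
    (τ : 𝟭 M ≅ 𝟭 M) : Prop :=
  ∀ X Y : M,
    τ.hom.app (X ⊗ Y) = (τ.hom.app X ⊗ₘ τ.hom.app Y) ≫ (β_ X Y).hom ≫ (β_ Y X).hom

/-- `f : Id ≅ D²` is monoidal with respect to the canonical monoidal structure `u`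
on `D²`. -/
def IsMonoidalWrt {M : Type u} [Category.{v} M] [MonoidalCategory M] (G : GVCat M)
    (u : ∀ Y₁ Y₂ : M, G.dd (Y₁ ⊗ Y₂) ≅ G.dd Y₁ ⊗ G.dd Y₂)
    (f : 𝟭 M ≅ G.ddF) : Prop :=
  ∀ Y₁ Y₂ : M,
    f.hom.app (Y₁ ⊗ Y₂) ≫ (u Y₁ Y₂).hom = (f.hom.app Y₁ ⊗ₘ f.hom.app Y₂)


namespace GVCat

variable {M : Type u} [Category.{v} M] [MonoidalCategory M] (G : GVCat M)

lemma g_apply' (X Y : M) (h : X ⊗ Y ⟶ G.K) :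
    G.g X Y h = (G.homEquiv' (G.dd Y) X).symm (G.homEquiv X Y h ≫ (G.dinvD (G.d Y)).inv) := by
  simp [g, Iso.homCongr]

lemma homEquiv'_natX' {X X' : M} (Y : M) (f : X' ⟶ X) (h : X ⊗ Y ⟶ G.K) :
    G.homEquiv' X' Y (f ▷ Y ≫ h) = G.homEquiv' X Y h ≫ G.dinvmap f := by
  simp [homEquiv', G.homEquiv_natX, Adjunction.homEquiv_naturality_left_symm, opEquiv]

lemma homEquiv'_symm_natX' {W W' X : M} (ξ : W ⟶ W') (m : X ⟶ G.dinv W') :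
    (G.homEquiv' W X).symm (m ≫ G.dinvmap ξ) = (ξ ▷ X) ≫ (G.homEquiv' W' X).symm m := by
  apply (G.homEquiv' W X).injective
  rw [G.homEquiv'_natX' X ξ ((G.homEquiv' W' X).symm m)]
  simp

lemma sep' {Z W : M} (ψ₁ ψ₂ : Z ⟶ W)
    (h : ∀ (X : M) (k : W ⊗ X ⟶ G.K), (ψ₁ ▷ X) ≫ k = (ψ₂ ▷ X) ≫ k) : ψ₁ = ψ₂ := by
  have e := h (G.dinv W) ((G.homEquiv W (G.dinv W)).symm (G.dDinv W).inv)
  have e1 := G.homEquiv_natX (G.dinv W) ψ₁ ((G.homEquiv W (G.dinv W)).symm (G.dDinv W).inv)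
  have e2 := G.homEquiv_natX (G.dinv W) ψ₂ ((G.homEquiv W (G.dinv W)).symm (G.dDinv W).inv)
  rw [e] at e1
  rw [e1] at e2
  simpa using e2

lemma dinvD_nat' {A B : M} (φ : A ⟶ B) :
    (G.dinvD (G.d B)).hom ≫ G.dmap φ = G.dinvmap (G.ddF.map φ) ≫ (G.dinvD (G.d A)).hom := by
  exact congrArg Quiver.Hom.unop (G.D.unitIso.hom.naturality (G.dmap φ).op)

lemma dmap_dinvD_inv' {A B : M} (φ : A ⟶ B) :
    G.dmap φ ≫ (G.dinvD (G.d A)).inv = (G.dinvD (G.d B)).inv ≫ G.dinvmap (G.ddF.map φ) := by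
  erw [Iso.comp_inv_eq, Category.assoc, ← G.dinvD_nat' φ, Iso.inv_hom_id_assoc]

lemma g_natY' {A B : M} (X : M) (φ : A ⟶ B) (k : X ⊗ B ⟶ G.K) :
    G.g X A (X ◁ φ ≫ k) = (G.ddF.map φ ▷ X) ≫ G.g X B k := by
  erw [g_apply', g_apply', G.homEquiv_natY, Category.assoc, G.dmap_dinvD_inv' φ,
    ← Category.assoc, G.homEquiv'_symm_natX']
  rfl

lemma g_symm_natY' {A B : M} (X : M) (φ : A ⟶ B) (h : G.dd B ⊗ X ⟶ G.K) :
    (G.g X A).symm ((G.ddF.map φ ▷ X) ≫ h) = (X ◁ φ) ≫ (G.g X B).symm h := by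
  apply (G.g X A).injective
  rw [Equiv.apply_symm_apply, g_natY']
  simp
  rfl

variable [BraidedCategory M]

open BraidedCategory in
lemma braid_id' (Y₁ Y₂ X : M) :
    (((β_ Y₁ Y₂).hom ≫ (β_ Y₂ Y₁).hom) ▷ X) ≫ (β_ (Y₁ ⊗ Y₂) X).hom =
      (α_ Y₁ Y₂ X).hom ≫ (β_ Y₁ (Y₂ ⊗ X)).hom ≫ (α_ Y₂ X Y₁).hom ≫
        (β_ Y₂ (X ⊗ Y₁)).hom ≫ (α_ X Y₁ Y₂).hom := by
  have h1 : (α_ Y₁ Y₂ X).hom ≫ (β_ Y₁ (Y₂ ⊗ X)).hom =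
      (β_ Y₁ Y₂).hom ▷ X ≫ (α_ Y₂ Y₁ X).hom ≫ Y₂ ◁ (β_ Y₁ X).hom ≫ (α_ Y₂ X Y₁).inv := by
    rw [← cancel_mono (α_ Y₂ X Y₁).hom]
    simpa using hexagon_forward Y₁ Y₂ X
  have h2 : (α_ Y₂ Y₁ X).hom ≫ (β_ Y₂ (Y₁ ⊗ X)).hom =
      (β_ Y₂ Y₁).hom ▷ X ≫ (α_ Y₁ Y₂ X).hom ≫ Y₁ ◁ (β_ Y₂ X).hom ≫ (α_ Y₁ X Y₂).inv := by
    rw [← cancel_mono (α_ Y₁ X Y₂).hom]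
    simpa using hexagon_forward Y₂ Y₁ X
  rw [comp_whiskerRight, Category.assoc, braiding_tensor_left_hom]
  slice_rhs 1 2 => rw [h1]
  simp only [Category.assoc, Iso.inv_hom_id_assoc]
  rw [braiding_naturality_right_assoc]
  slice_rhs 2 3 => rw [h2]
  simp

lemma gchain_apply' (Y₁ Y₂ X : M) (k : G.dd (Y₁ ⊗ Y₂) ⊗ X ⟶ G.K) :
    G.gchain Y₁ Y₂ X k = (α_ (G.dd Y₁) (G.dd Y₂) X).hom ≫
      G.g (G.dd Y₂ ⊗ X) Y₁ ((α_ (G.dd Y₂) X Y₁).hom ≫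
        G.g (X ⊗ Y₁) Y₂ ((α_ X Y₁ Y₂).hom ≫ (G.g X (Y₁ ⊗ Y₂)).symm k)) := by
  simp [gchain, Iso.homCongr]

lemma theta_nat' (θp : ∀ Y : M, Y ≅ G.dd Y) (hθp : G.ThetaPlusChar θp) {A B : M} (φ : A ⟶ B) :
    φ ≫ (θp B).hom = (θp A).hom ≫ G.ddF.map φ := by
  apply G.sep'
  intro X k
  erw [comp_whiskerRight, comp_whiskerRight, Category.assoc, Category.assoc,
    hθp B X k, hθp A X (G.ddF.map φ ▷ X ≫ k), G.g_symm_natY' X φ k,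
    BraidedCategory.braiding_naturality_left_assoc]

lemma theta_K' (θp : ∀ Y : M, Y ≅ G.dd Y) (hθp : G.ThetaPlusChar θp)
    (cK : G.K ⟶ G.dd G.K) (hcK : G.CKChar cK) : (θp G.K).hom = cK := by
  have h1 : (θp G.K).hom ≫ G.mK = 𝟙 G.K := by
    rw [mK, ← Category.assoc, rightUnitor_inv_naturality, Category.assoc, hθp,
      Equiv.symm_apply_apply, braiding_tensorUnit_right]
    simp
  calc (θp G.K).hom = (θp G.K).hom ≫ G.mK ≫ cK := by rw [hcK.2]; simp
  _ = cK := by rw [← Category.assoc, h1, Category.id_comp]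

lemma theta_mon' (θp : ∀ Y : M, Y ≅ G.dd Y) (hθp : G.ThetaPlusChar θp)
    (u : ∀ Y₁ Y₂ : M, G.dd (Y₁ ⊗ Y₂) ≅ G.dd Y₁ ⊗ G.dd Y₂)
    (hu : G.UChar u) (Y₁ Y₂ : M) :
    ((β_ Y₁ Y₂).hom ≫ (β_ Y₂ Y₁).hom) ≫ (θp (Y₁ ⊗ Y₂)).hom ≫ (u Y₁ Y₂).hom =
      ((θp Y₁).hom ⊗ₘ (θp Y₂).hom) := by
  apply G.sep'
  intro X h
  have hgk : h = G.gchain Y₁ Y₂ X ((G.gchain Y₁ Y₂ X).symm h) := (Equiv.apply_symm_apply _ h).symm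
  set k := (G.gchain Y₁ Y₂ X).symm h with hk
  have hL : ((((β_ Y₁ Y₂).hom ≫ (β_ Y₂ Y₁).hom) ≫ (θp (Y₁ ⊗ Y₂)).hom ≫ (u Y₁ Y₂).hom) ▷ X) ≫ h =
      (α_ Y₁ Y₂ X).hom ≫ (β_ Y₁ (Y₂ ⊗ X)).hom ≫ (α_ Y₂ X Y₁).hom ≫
        (β_ Y₂ (X ⊗ Y₁)).hom ≫ (α_ X Y₁ Y₂).hom ≫ (G.g X (Y₁ ⊗ Y₂)).symm k := by
    conv_lhs => rw [hgk, ← hu]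
    simp only [comp_whiskerRight, Category.assoc]
    rw [← comp_whiskerRight_assoc (u Y₁ Y₂).hom (u Y₁ Y₂).inv X, Iso.hom_inv_id,
      id_whiskerRight, Category.id_comp, hθp (Y₁ ⊗ Y₂) X k,
      ← Category.assoc, ← Category.assoc, ← comp_whiskerRight, ← Category.assoc,
      braid_id']
    simp only [Category.assoc]
  have e1 : (((θp Y₁).hom ⊗ₘ (θp Y₂).hom) ▷ X) ≫ (α_ (G.dd Y₁) (G.dd Y₂) X).hom =
      (α_ Y₁ Y₂ X).hom ≫ ((θp Y₁).hom ⊗ₘ ((θp Y₂).hom ▷ X)) := by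
    simpa using associator_naturality (θp Y₁).hom (θp Y₂).hom (𝟙 X)
  have hR : ((((θp Y₁).hom ⊗ₘ (θp Y₂).hom)) ▷ X) ≫ h =
      (α_ Y₁ Y₂ X).hom ≫ (β_ Y₁ (Y₂ ⊗ X)).hom ≫ (α_ Y₂ X Y₁).hom ≫
        (β_ Y₂ (X ⊗ Y₁)).hom ≫ (α_ X Y₁ Y₂).hom ≫ (G.g X (Y₁ ⊗ Y₂)).symm k := by
    conv_lhs => rw [hgk, gchain_apply']
    rw [← Category.assoc, e1, Category.assoc,
      tensorHom_def' (θp Y₁).hom ((θp Y₂).hom ▷ X)]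
    simp only [Category.assoc]
    rw [hθp Y₁ (G.dd Y₂ ⊗ X) _, Equiv.symm_apply_apply,
      BraidedCategory.braiding_naturality_right_assoc,
      associator_naturality_left_assoc (θp Y₂).hom X Y₁,
      hθp Y₂ (X ⊗ Y₁) _, Equiv.symm_apply_apply]
  rw [hL, hR]

end GVCat

/-- Let `(M, K, β)` be a braided Grothendieck–Verdier category.
The map `f ↦ (θ⁺)⁻¹ ∘ f` is a bijection between pivotal structures
(monoidal natural isomorphisms `f : Id ≅ D²` with `f_K = cK`) and twists `τ` with
`τ_K = id K`; the correspondence is `f = θ⁺ ∘ τ`. -/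
theorem stmt17 {M : Type u} [Category.{v} M] [MonoidalCategory M] [BraidedCategory M]
    (G : GVCat M)
    (u : ∀ Y₁ Y₂ : M, G.dd (Y₁ ⊗ Y₂) ≅ G.dd Y₁ ⊗ G.dd Y₂)
    (hu : G.UChar u)
    (cK : G.K ⟶ G.dd G.K)
    (hcK : G.CKChar cK)
    (θp : ∀ Y : M, Y ≅ G.dd Y)
    (hθp : G.ThetaPlusChar θp) :
    (∀ f : 𝟭 M ≅ G.ddF,
      (IsMonoidalWrt G u f ∧ f.hom.app G.K = cK) →
      ∃! τ : 𝟭 M ≅ 𝟭 M,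
        (IsTwist τ ∧ τ.hom.app G.K = 𝟙 G.K)
        ∧ ∀ X : M, f.hom.app X = τ.hom.app X ≫ (θp X).hom)
    ∧ (∀ τ : 𝟭 M ≅ 𝟭 M,
      (IsTwist τ ∧ τ.hom.app G.K = 𝟙 G.K) →
      ∃! f : 𝟭 M ≅ G.ddF,
        (IsMonoidalWrt G u f ∧ f.hom.app G.K = cK)
        ∧ ∀ X : M, f.hom.app X = τ.hom.app X ≫ (θp X).hom) := by
  have hθinv : ∀ X Y : M, (θp (X ⊗ Y)).inv =
      (u X Y).hom ≫ ((θp X).inv ⊗ₘ (θp Y).inv) ≫ (β_ X Y).hom ≫ (β_ Y X).hom := by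
    intro X Y
    rw [← cancel_epi (θp (X ⊗ Y)).hom, Iso.hom_inv_id, ← Category.assoc,
      ← cancel_epi ((β_ X Y).hom ≫ (β_ Y X).hom), ← Category.assoc,
      G.theta_mon' θp hθp u hu X Y]
    rw [Category.assoc, tensorHom_comp_tensorHom_assoc, Iso.hom_inv_id, Iso.hom_inv_id, id_tensorHom_id,
      Category.id_comp, Category.comp_id]
  have hddinv : ∀ {A B : M} (φ : A ⟶ B), G.ddF.map φ ≫ (θp B).inv = (θp A).inv ≫ φ := by
    intro A B φ
    erw [Iso.comp_inv_eq, Category.assoc, G.theta_nat' θp hθp φ, Iso.inv_hom_id_assoc]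
  have hθK : (θp G.K).hom = cK := G.theta_K' θp hθp cK hcK
  constructor
  · rintro f ⟨hmon, hfK⟩
    refine ⟨NatIso.ofComponents (fun X => f.app X ≪≫ (θp X).symm) (fun {A B} φ => ?_),
      ⟨⟨?_, ?_⟩, ?_⟩, ?_⟩
    · simp only [Functor.id_obj, Functor.id_map, Iso.trans_hom, Iso.app_hom, Iso.symm_hom]
      have hnat := f.hom.naturality φ
      simp only [Functor.id_map] at hnat
      erw [← Category.assoc, hnat, Category.assoc, hddinv φ, ← Category.assoc]
      rfl
    · intro X Y
      change f.hom.app (X ⊗ Y) ≫ (θp (X ⊗ Y)).inv = ((f.hom.app X ≫ (θp X).inv) ⊗ₘ (f.hom.app Y ≫ (θp Y).inv)) ≫ (β_ X Y).hom ≫ (β_ Y X).hom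
      have hfXY : f.hom.app (X ⊗ Y) = (f.hom.app X ⊗ₘ f.hom.app Y) ≫ (u X Y).inv := by
        erw [← hmon X Y, Category.assoc, Iso.hom_inv_id, Category.comp_id]
      erw [hfXY, hθinv X Y, Category.assoc, Iso.inv_hom_id_assoc, ← Category.assoc,
        tensorHom_comp_tensorHom]
    · change f.hom.app G.K ≫ (θp G.K).inv = 𝟙 G.K
      erw [hfK, ← hθK, Iso.hom_inv_id]
      rfl
    · intro X
      change f.hom.app X = (f.hom.app X ≫ (θp X).inv) ≫ (θp X).hom
      erw [Category.assoc, Iso.inv_hom_id, Category.comp_id]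
    · rintro τ' ⟨-, hc⟩
      apply Iso.ext
      apply NatTrans.ext
      funext X
      change τ'.hom.app X = f.hom.app X ≫ (θp X).inv
      erw [hc X, Category.assoc, Iso.hom_inv_id, Category.comp_id]
  · rintro τ ⟨htw, hτK⟩
    refine ⟨NatIso.ofComponents (fun X => τ.app X ≪≫ θp X) (fun {A B} φ => ?_),
      ⟨⟨?_, ?_⟩, ?_⟩, ?_⟩
    · simp only [Functor.id_obj, Functor.id_map, Iso.trans_hom, Iso.app_hom]
      have hnat := τ.hom.naturality φ
      simp only [Functor.id_map] at hnat
      erw [← Category.assoc, hnat, Category.assoc, G.theta_nat' θp hθp φ, ← Category.assoc]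
      rfl
    · intro X Y
      change (τ.hom.app (X ⊗ Y) ≫ (θp (X ⊗ Y)).hom) ≫ (u X Y).hom = (τ.hom.app X ≫ (θp X).hom) ⊗ₘ (τ.hom.app Y ≫ (θp Y).hom)
      erw [htw X Y, ← tensorHom_comp_tensorHom, ← G.theta_mon' θp hθp u hu X Y]
      simp only [Category.assoc]
    · change τ.hom.app G.K ≫ (θp G.K).hom = cK
      erw [hτK]
      simpa using hθK
    · intro X
      rfl
    · rintro f' ⟨-, hc⟩
      apply Iso.ext
      apply NatTrans.ext
      funext X
      change f'.hom.app X = τ.hom.app X ≫ (θp X).hom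
      exact hc X
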